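/- Suppose R = ℂ and that Hom(Γ, ℂ) = 0, i.e. every group homomorphism from Γ to the additive group of ℂ is trivial. Then J_q = I for every q ≥ 1, and consequently H_q^p(Γ,Σ,V) ≅ H^p(Γ,V) for every ℂ[Γ]-module V, every p ≥ 0 and every q ≥ 1. -/

import Mathlib

open CategoryTheory

noncomputable section

variable (R : Type) [CommRing R] (Γ : Type) [Group Γ]

/-- The augmentation map of the group algebra `A = R[Γ]`, sending each `γ ∈ Γ` to `1`. -/
def aug : MonoidAlgebra R Γ →ₐ[R] R := MonoidAlgebra.lift R R Γ 1

/-- The augmentation ideal `I = ker(aug) ⊆ A`. -/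
def Iaug : Ideal (MonoidAlgebra R Γ) := RingHom.ker (aug R Γ).toRingHom

/-- `I` as an `R`-submodule of `A` (so that the powers `I^q` make sense). -/
def IaugR : Submodule R (MonoidAlgebra R Γ) := Submodule.restrictScalars R (Iaug R Γ)

/-- The augmentation ideal of `R[Σ]` viewed inside `A`: the `R`-span of `σ - 1`, `σ ∈ Σ`. -/
def ISig (Sg : Subgroup Γ) : Submodule R (MonoidAlgebra R Γ) :=
  Submodule.span R {x | ∃ σ ∈ Sg, x = MonoidAlgebra.of R Γ σ - 1}

/-- The left ideal `A·I_Σ` generated by `I_Σ`. -/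
def AISig (Sg : Subgroup Γ) : Ideal (MonoidAlgebra R Γ) :=
  Ideal.span (ISig R Γ Sg : Set (MonoidAlgebra R Γ))

/-- `J_q = I^q + A·I_Σ`. -/
def J (Sg : Subgroup Γ) (q : ℕ) : Ideal (MonoidAlgebra R Γ) :=
  Ideal.span ((IaugR R Γ ^ q : Submodule R (MonoidAlgebra R Γ)) : Set (MonoidAlgebra R Γ))
    ⊔ AISig R Γ Sg

/-- `Ext_A^p(X, V)` as an abelian group (`ℤ`-module). -/
abbrev ExtG (p : ℕ) (X V : ModuleCat (MonoidAlgebra R Γ)) : Type :=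
  ((Ext ℤ (ModuleCat (MonoidAlgebra R Γ)) p).obj (Opposite.op X)).obj V

/-- Ordinary group cohomology `H^p(Γ, V) = Ext_A^p(R, V)`, `R = A/I` the trivial module. -/
abbrev Hp (p : ℕ) (V : ModuleCat (MonoidAlgebra R Γ)) : Type :=
  ExtG R Γ p (ModuleCat.of _ (MonoidAlgebra R Γ ⧸ Iaug R Γ)) V

/-- Higher order cohomology `H_q^p(Γ,Σ,V) = Ext_A^p(A/J_q, V)`. -/
abbrev Hqp (Sg : Subgroup Γ) (q p : ℕ) (V : ModuleCat (MonoidAlgebra R Γ)) : Type :=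
  ExtG R Γ p (ModuleCat.of _ (MonoidAlgebra R Γ ⧸ J R Γ Sg q)) V

/-- The `A`-module `J_q / J_{q+1}`. -/
abbrev Jmod (Sg : Subgroup Γ) (q : ℕ) :=
  ↥(J R Γ Sg q) ⧸ (Submodule.comap (J R Γ Sg q).subtype (J R Γ Sg (q+1)))

/-!
Modulo `I²` the map `γ ↦ γ - 1` is a homomorphism from `Γ` to the additive group of `A / I²`,
because `γδ - 1 = (γ - 1) + (δ - 1) + (γ - 1)(δ - 1)`. Composing it with any `ℂ`-linear
functional gives a character of `Γ`, which is trivial by hypothesis; so every `γ - 1` lies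
in `I²`, and since these elements span `I`, the ideal `I` is idempotent. Hence `I^q = I` for
`q ≥ 1`, and as `A·I_Σ ⊆ I` we get `J_q = I`: the two `Ext` groups are then the same.
-/

section AugmentationIdeal

lemma aug_of (γ : Γ) : aug R Γ (MonoidAlgebra.of R Γ γ) = 1 := by
  simp [aug]

lemma of_sub_one_mem_Iaug (γ : Γ) : MonoidAlgebra.of R Γ γ - 1 ∈ Iaug R Γ := by
  change aug R Γ _ = 0
  rw [map_sub, aug_of, map_one, sub_self]

lemma sub_aug_smul_one_mem_span (x : MonoidAlgebra R Γ) :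
    x - aug R Γ x • 1 ∈ Submodule.span R (Set.range fun γ => MonoidAlgebra.of R Γ γ - 1) := by
  induction x using MonoidAlgebra.induction_on with
  | of γ =>
    rw [aug_of, one_smul]
    exact Submodule.subset_span ⟨γ, rfl⟩
  | add x y hx hy =>
    convert Submodule.add_mem _ hx hy using 1
    rw [map_add, add_smul]
    abel
  | smul r x hx =>
    convert Submodule.smul_mem _ r hx using 1
    rw [map_smul, smul_sub, smul_smul, smul_eq_mul]

lemma IaugR_le_span_of_sub_one :
    IaugR R Γ ≤ Submodule.span R (Set.range fun γ => MonoidAlgebra.of R Γ γ - 1) := by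
  intro x hx
  have hx0 : aug R Γ x = 0 := hx
  simpa [hx0] using sub_aug_smul_one_mem_span R Γ x

lemma of_mul_sub_one (γ δ : Γ) :
    MonoidAlgebra.of R Γ (γ * δ) - 1 =
      (MonoidAlgebra.of R Γ γ - 1) + (MonoidAlgebra.of R Γ δ - 1) +
        (MonoidAlgebra.of R Γ γ - 1) * (MonoidAlgebra.of R Γ δ - 1) := by
  rw [map_mul]
  noncomm_ring

lemma AISig_le_Iaug (Sg : Subgroup Γ) : AISig R Γ Sg ≤ Iaug R Γ :=
  Ideal.span_le.mpr <| show ISig R Γ Sg ≤ IaugR R Γ from Submodule.span_le.mpr <| by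
    rintro _ ⟨σ, -, rfl⟩
    exact of_sub_one_mem_Iaug R Γ σ

lemma J_eq_Iaug_of_pow_eq (Sg : Subgroup Γ) {q : ℕ} (hq : IaugR R Γ ^ q = IaugR R Γ) :
    J R Γ Sg q = Iaug R Γ := by
  rw [J, hq, IaugR, Submodule.coe_restrictScalars, Ideal.span_eq]
  exact sup_eq_left.mpr (AISig_le_Iaug R Γ Sg)

def ofSubOneModSq : Γ →* Multiplicative (MonoidAlgebra R Γ ⧸ IaugR R Γ * IaugR R Γ) where
  toFun γ := .ofAdd (Submodule.mkQ _ (MonoidAlgebra.of R Γ γ - 1))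
  map_one' := by rw [map_one, sub_self, map_zero, ofAdd_zero]
  map_mul' γ δ := by
    have hprod : (MonoidAlgebra.of R Γ γ - 1) * (MonoidAlgebra.of R Γ δ - 1) ∈
        IaugR R Γ * IaugR R Γ :=
      Submodule.mul_mem_mul (of_sub_one_mem_Iaug R Γ γ) (of_sub_one_mem_Iaug R Γ δ)
    rw [← ofAdd_add, ← map_add, of_mul_sub_one, map_add, Submodule.mkQ_apply _ (_ * _),
      (Submodule.Quotient.mk_eq_zero _).mpr hprod, add_zero]

end AugmentationIdeal

section NoCharacters

variable {K : Type} [Field K]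

lemma of_sub_one_mem_IaugR_mul_self (h : ∀ φ : Γ →* Multiplicative K, ∀ γ : Γ, φ γ = 1)
    (γ : Γ) : MonoidAlgebra.of K Γ γ - 1 ∈ IaugR K Γ * IaugR K Γ := by
  rw [← Submodule.Quotient.mk_eq_zero, ← Module.forall_dual_apply_eq_zero_iff K]
  intro ψ
  exact congrArg Multiplicative.toAdd
    (h ((AddMonoidHom.toMultiplicative (ψ : _ →+ K)).comp (ofSubOneModSq K Γ)) γ)

lemma isIdempotentElem_IaugR (h : ∀ φ : Γ →* Multiplicative K, ∀ γ : Γ, φ γ = 1) :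
    IsIdempotentElem (IaugR K Γ) := by
  refine le_antisymm (Submodule.mul_le.mpr fun x _ y hy => Ideal.mul_mem_left _ x hy) ?_
  refine (IaugR_le_span_of_sub_one K Γ).trans (Submodule.span_le.mpr ?_)
  rintro _ ⟨γ, rfl⟩
  exact of_sub_one_mem_IaugR_mul_self Γ h γ

end NoCharacters

theorem higher_order_trivial_of_no_characters (Sg : Subgroup Γ)
    (h : ∀ φ : Γ →* Multiplicative ℂ, ∀ γ : Γ, φ γ = 1) :
    ∀ q : ℕ, 1 ≤ q →
      J ℂ Γ Sg q = Iaug ℂ Γ ∧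
      ∀ (V : ModuleCat (MonoidAlgebra ℂ Γ)) (p : ℕ),
        Nonempty ((Hqp ℂ Γ Sg q p V) ≃ₗ[ℤ] (Hp ℂ Γ p V)) := by
  intro q hq
  have hJ : J ℂ Γ Sg q = Iaug ℂ Γ :=
    J_eq_Iaug_of_pow_eq ℂ Γ Sg ((isIdempotentElem_IaugR Γ h).pow_eq (by omega))
  refine ⟨hJ, fun V p => ?_⟩
  unfold Hqp
  rw [hJ]
  exact ⟨LinearEquiv.refl ℤ _⟩
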